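/- arXiv:2309.16010 — 3 statements merged into one kernel-verified Lean document; each statement's English description precedes it below -/
import Mathlib

section
/- If two ascents occurring in a word overlap, then the overlapping subword is also an ascent. -/
variable {X : Type*}

/-- A word over `X ∪ X⁻¹` (a letter is a generator with a sign) is reduced if no
letter is immediately followed by its inverse. -/
def Reduced (w : List (X × Bool)) : Prop :=
  w.Chain' fun a b => a.1 = b.1 → a.2 = b.2

/-- A word is cyclically reduced if it is reduced and its first letter is not the
inverse of its last letter. -/
def CyclicallyReduced (w : List (X × Bool)) : Prop :=
  Reduced w ∧ ∀ a ∈ w.head?, ∀ b ∈ w.getLast?, (a.1 = b.1 → a.2 = b.2)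

/-- A word is periodic if it is a concatenation of `k > 1` copies of some word. -/
def Periodic (w : List (X × Bool)) : Prop :=
  ∃ (U : List (X × Bool)) (k : ℕ), 1 < k ∧ w = (List.replicate k U).flatten

section Order
variable [LinearOrder (FreeGroup X)]

/-- A word is an ascent (w.r.t. an order on the free group) if it is nonempty and
every nonempty prefix and every nonempty suffix represents an element `≻ 1`. -/
def IsAscent (w : List (X × Bool)) : Prop :=
  w ≠ [] ∧ (∀ i, 0 < i → i ≤ w.length → 1 < FreeGroup.mk (w.take i)) ∧
    (∀ i, i < w.length → 1 < FreeGroup.mk (w.drop i))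

/-- A word is a descent if it is nonempty and every nonempty prefix and every
nonempty suffix represents an element `≺ 1`. -/
def IsDescent (w : List (X × Bool)) : Prop :=
  w ≠ [] ∧ (∀ i, 0 < i → i ≤ w.length → FreeGroup.mk (w.take i) < 1) ∧
    (∀ i, i < w.length → FreeGroup.mk (w.drop i) < 1)

/-- `B` occurs as a subword of some cyclic permutation of `W` or of `W⁻¹`. -/
def InRW (W B : List (X × Bool)) : Prop :=
  ∃ W', (List.IsRotated W W' ∨ List.IsRotated (FreeGroup.invRev W) W') ∧ B <:+: W'

/-- `A` is the maximal ascent of `W`: an ascent occurring as a subword of a cyclic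
permutation of `W` or `W⁻¹`, and `⪰` every such ascent. -/
def IsMaxAscent (W A : List (X × Bool)) : Prop :=
  IsAscent A ∧ InRW W A ∧
    ∀ B, IsAscent B → InRW W B → FreeGroup.mk B ≤ FreeGroup.mk A

end Order

/-- If two ascents occurring in a word overlap (a nonempty suffix of one is a prefix
of the other), then the overlapping subword is also an ascent. -/
theorem overlap_of_ascents_is_ascent [LinearOrder (FreeGroup X)]
    [CovariantClass (FreeGroup X) (FreeGroup X) (· * ·) (· < ·)]
    [CovariantClass (FreeGroup X) (FreeGroup X) (Function.swap (· * ·)) (· < ·)]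
    (A B S : List (X × Bool)) (hA : IsAscent A) (hB : IsAscent B)
    (hS : S ≠ []) (hsuf : S <:+ A) (hpre : S <+: B) :
    IsAscent S := by
  obtain ⟨t, ht⟩ := hsuf
  obtain ⟨u, hu⟩ := hpre
  refine ⟨hS, ?_, ?_⟩
  · intro i hi hile
    have h1 : B.take i = S.take i := by
      rw [← hu, List.take_append,
        Nat.sub_eq_zero_of_le hile, List.take_zero, List.append_nil]
    have := hB.2.1 i hi (by rw [← hu, List.length_append]; omega)
    rwa [h1] at this
  · intro i hi
    have h2 : A.drop (t.length + i) = S.drop i := by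
      rw [← ht, List.drop_append,
        List.drop_eq_nil_of_le (by omega), List.nil_append]
      congr 1; omega
    have := hA.2.2 (t.length + i) (by rw [← ht, List.length_append]; omega)
    rwa [h2] at this
end

section
/- Let W be a cyclically reduced word in a bi-ordered free group (F, ≺), and let W = PAQ where A is the maximal ascent among all subwords of cyclic permutations of W and W⁻¹. Then W ≻ 1. -/
variable {X : Type*}

/-! ### Auxiliary lemmas -/

section Helpers

variable {G : Type*} [Group G] [LinearOrder G]
  [CovariantClass G G (· * ·) (· < ·)]
  [CovariantClass G G (Function.swap (· * ·)) (· < ·)]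

private lemma aux_lt_of_mul_lt_mul_left {a b c : G} (h : a * b < a * c) : b < c := by
  by_contra hc
  push_neg at hc
  rcases hc.lt_or_eq with h' | h'
  · exact absurd (mul_lt_mul_right h' a) (asymm h)
  · rw [h'] at h; exact lt_irrefl _ h

private lemma aux_le_of_mul_le_right {a c : G} (h : a * c ≤ c) : a ≤ 1 := by
  by_contra hc
  push_neg at hc
  have h1 : 1 * c < a * c := mul_lt_mul_left hc c
  rw [one_mul] at h1
  exact absurd h (not_le.2 h1)

private lemma aux_mul_le_of_le_one {a : G} (c : G) (ha : a ≤ 1) : a * c ≤ c := by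
  rcases ha.lt_or_eq with h | h
  · have := mul_lt_mul_left h c
    rw [one_mul] at this
    exact this.le
  · rw [h, one_mul]

private lemma aux_le_mul_of_one_le {a : G} (c : G) (ha : (1 : G) ≤ a) : c ≤ a * c := by
  rcases ha.lt_or_eq with h | h
  · have := mul_lt_mul_left h c
    rw [one_mul] at this
    exact this.le
  · rw [← h, one_mul]

private lemma aux_one_le_inv_of_le_one {v : G} (h : v ≤ 1) : (1 : G) ≤ v⁻¹ := by
  rcases h.lt_or_eq with h' | h'
  · have := mul_lt_mul_right h' v⁻¹
    rw [inv_mul_cancel, mul_one] at this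
    exact this.le
  · rw [h']; simp

private lemma aux_one_lt_conj {g a : G} (h : 1 < a) : 1 < g * a * g⁻¹ := by
  have h1 : g * 1 * g⁻¹ < g * a * g⁻¹ := mul_lt_mul_left (mul_lt_mul_right h g) g⁻¹
  simpa using h1

end Helpers

private lemma aux_invRev_append (u v : List (X × Bool)) :
    FreeGroup.invRev (u ++ v) = FreeGroup.invRev v ++ FreeGroup.invRev u := by
  simp [FreeGroup.invRev]

/-- A reduced word representing the identity is empty. -/
private lemma Reduced.eq_nil_of_mk_eq_one {L : List (X × Bool)} (h : Reduced L)
    (h1 : FreeGroup.mk L = 1) : L = [] := by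
  classical
  have hfix : FreeGroup.reduce L = L := by
    have hred := FreeGroup.reduce.red (L := L)
    rcases Relation.ReflTransGen.cases_head hred with heq | ⟨c, hstep, -⟩
    · exact heq.symm
    · exfalso
      cases hstep with
      | not =>
        rename_i L1 L2 x b
        have hinf : [(x, b), (x, !b)] <:+: L1 ++ (x, b) :: (x, !b) :: L2 :=
          ⟨L1, L2, by simp⟩
        have hch := (h : List.Chain' _ _).infix hinf
        have := (List.isChain_cons_cons.1 hch).1 rfl
        simp at this
  have h2 : L = (FreeGroup.mk L).toWord := by rw [FreeGroup.toWord_mk, hfix]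
  rw [h1, FreeGroup.toWord_one] at h2
  exact h2

/-- Any rotation of a cyclically reduced word is reduced. -/
private lemma aux_rotate_reduced {u v : List (X × Bool)} (h : CyclicallyReduced (u ++ v)) :
    Reduced (v ++ u) := by
  obtain ⟨hred, hcyc⟩ := h
  unfold Reduced at hred ⊢
  rcases u with _ | ⟨a, u⟩
  · simpa using hred
  rcases List.eq_nil_or_concat v with rfl | ⟨v', z, rfl⟩
  · simpa using hred
  show List.IsChain _ _
  rw [List.isChain_append]
  refine ⟨hred.suffix (List.suffix_append _ _), hred.prefix (List.prefix_append _ _), ?_⟩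
  intro x hx y hy
  have hy' : a = y := by simpa using hy
  have hx' : z = x := by simpa using hx
  have hhead : ((a :: u) ++ v'.concat z).head? = some a := rfl
  have hlast : ((a :: u) ++ v'.concat z).getLast? = some z := by
    rw [List.concat_eq_append, List.getLast?_append_of_ne_nil _ (by simp)]
    simp
  have hc := hcyc a (by rw [hhead]; rfl) z (by rw [hlast]; rfl)
  intro h1
  rw [← hx', ← hy'] at h1 ⊢
  exact (hc h1.symm).symm

/-- Main extraction lemma: any word representing an element `> 1` contains a
contiguous subword which is an ascent and represents an element at least as large. -/
private lemma aux_exists_ascent [LinearOrder (FreeGroup X)]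
    [CovariantClass (FreeGroup X) (FreeGroup X) (· * ·) (· < ·)]
    [CovariantClass (FreeGroup X) (FreeGroup X) (Function.swap (· * ·)) (· < ·)]
    (C : List (X × Bool)) (h : 1 < FreeGroup.mk C) :
    ∃ D, D <:+: C ∧ IsAscent D ∧ FreeGroup.mk C ≤ FreeGroup.mk D := by
  classical
  set n := C.length with hn
  set f : ℕ → FreeGroup X := fun k => FreeGroup.mk (C.take k) with hf
  have hf0 : f 0 = 1 := by simp [hf, ← FreeGroup.one_eq_mk]
  have hfn : f n = FreeGroup.mk C := by simp [hf, hn]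
  have hex : ∃ j, j ≤ n ∧ ∀ m, m ≤ n → f m ≤ f j := by
    obtain ⟨j, hj, hmax⟩ := Finset.exists_max_image (Finset.range (n + 1)) f ⟨0, by simp⟩
    exact ⟨j, by simpa [Nat.lt_succ_iff] using hj,
      fun m hm => hmax m (by simp [Nat.lt_succ_iff, hm])⟩
  set j := Nat.find hex with hjdef
  obtain ⟨hjn, hjmax⟩ := Nat.find_spec hex
  have hjlt : ∀ m, m < j → f m < f j := by
    intro m hm
    have hmn : m ≤ n := (hm.trans_le hjn).le
    have hnot := Nat.find_min hex hm
    push_neg at hnot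
    obtain ⟨m', hm'n, hlt⟩ := hnot hmn
    exact hlt.trans_le (hjmax m' hm'n)
  set Pm : ℕ → Prop := fun k => k ≤ j ∧ ∀ m, m ≤ j → f k ≤ f m with hPmdef
  have hexi : ∃ k, k ≤ j ∧ Pm k := by
    obtain ⟨k, hk, hmin⟩ := Finset.exists_min_image (Finset.range (j + 1)) f ⟨0, by simp⟩
    have hk' : k ≤ j := by simpa [Nat.lt_succ_iff] using hk
    exact ⟨k, hk', hk', fun m hm => hmin m (by simp [Nat.lt_succ_iff, hm])⟩
  obtain ⟨k0, hk0, hPk0⟩ := hexi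
  set i := Nat.findGreatest Pm j with hidef
  have hPi : Pm i := Nat.findGreatest_spec hk0 hPk0
  have hij_le : i ≤ j := Nat.findGreatest_le j
  have hilt : ∀ m, i < m → m ≤ j → f i < f m := by
    intro m him hmj
    have hnp : ¬(m ≤ j ∧ ∀ m', m' ≤ j → f m ≤ f m') :=
      Nat.findGreatest_is_greatest him hmj
    push_neg at hnp
    obtain ⟨m', hm'j, hlt⟩ := hnp hmj
    exact (hPi.2 m' hm'j).trans_lt hlt
  have hfi_le_one : f i ≤ 1 := by
    have := hPi.2 0 (Nat.zero_le _)
    rwa [hf0] at this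
  have hfifj : f i < f j := by
    calc f i ≤ 1 := hfi_le_one
    _ < FreeGroup.mk C := h
    _ = f n := hfn.symm
    _ ≤ f j := hjmax n le_rfl
  have hij : i < j := lt_of_le_of_ne hij_le (fun he => by rw [he] at hfifj; exact lt_irrefl _ hfifj)
  set D := (C.drop i).take (j - i) with hD
  have hlenD : D.length = j - i := by
    simp only [hD, List.length_take, List.length_drop]
    exact Nat.min_eq_left (Nat.sub_le_sub_right hjn i)
  have htake : ∀ m, m ≤ j - i → FreeGroup.mk (C.take i) * FreeGroup.mk (D.take m) = f (i + m) := by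
    intro m hm
    rw [FreeGroup.mul_mk]
    show FreeGroup.mk _ = FreeGroup.mk (C.take (i + m))
    congr 1
    rw [hD, List.take_take, Nat.min_eq_left hm, List.take_add]
  have hdropD : ∀ m, m ≤ j - i →
      FreeGroup.mk (C.take (i + m)) * FreeGroup.mk (D.drop m) = f j := by
    intro m hm
    rw [FreeGroup.mul_mk]
    show FreeGroup.mk _ = FreeGroup.mk (C.take j)
    congr 1
    have h1 : D.drop m = (C.drop (i + m)).take (j - (i + m)) := by
      rw [hD, List.drop_take, List.drop_drop]
      have e2 : j - i - m = j - (i + m) := by omega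
      rw [e2]
      try rw [Nat.add_comm m i]
    rw [h1, ← List.take_add, Nat.add_sub_cancel' (by omega : i + m ≤ j)]
  have hmkD : FreeGroup.mk (C.take i) * FreeGroup.mk D = f j := by
    have := htake (j - i) le_rfl
    rwa [Nat.add_sub_cancel' hij_le, hD, List.take_take, Nat.min_self] at this
  have hDne : D ≠ [] := by
    intro hnil
    rw [hnil] at hlenD
    simp at hlenD
    omega
  refine ⟨D, ⟨C.take i, C.drop j, ?_⟩, ⟨hDne, ?_, ?_⟩, ?_⟩
  · rw [hD, ← List.take_add, Nat.add_sub_cancel' hij_le, List.take_append_drop]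
  · -- prefixes
    intro m hm0 hmlen
    rw [hlenD] at hmlen
    have hkey := htake m hmlen
    have hlt : f i < f (i + m) := hilt (i + m) (by omega) (by omega)
    rw [← hkey] at hlt
    have : FreeGroup.mk (C.take i) * 1 < FreeGroup.mk (C.take i) * FreeGroup.mk (D.take m) := by
      rwa [mul_one]
    exact aux_lt_of_mul_lt_mul_left this
  · -- suffixes
    intro m hmlen
    rw [hlenD] at hmlen
    have hkey := hdropD m hmlen.le
    have hlt : f (i + m) < f j := hjlt (i + m) (by omega)
    rw [← hkey] at hlt
    have : FreeGroup.mk (C.take (i + m)) * 1 <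
        FreeGroup.mk (C.take (i + m)) * FreeGroup.mk (D.drop m) := by
      simpa [hf] using hlt
    exact aux_lt_of_mul_lt_mul_left this
  · -- mk C ≤ mk D
    calc FreeGroup.mk C = f n := hfn.symm
    _ ≤ f j := hjmax n le_rfl
    _ = FreeGroup.mk (C.take i) * FreeGroup.mk D := hmkD.symm
    _ ≤ FreeGroup.mk D := aux_mul_le_of_le_one _ hfi_le_one

/-- If the maximal ascent `A` of a cyclically reduced word `W` occurs as a subword
of `W` itself (`W = PAQ`), then `W ≻ 1`. -/
theorem word_with_max_ascent_is_positive [LinearOrder (FreeGroup X)]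
    [CovariantClass (FreeGroup X) (FreeGroup X) (· * ·) (· < ·)]
    [CovariantClass (FreeGroup X) (FreeGroup X) (Function.swap (· * ·)) (· < ·)]
    (W P A Q : List (X × Bool)) (hcr : CyclicallyReduced W)
    (hmax : IsMaxAscent W A) (hW : W = P ++ A ++ Q) :
    1 < FreeGroup.mk W := by
  obtain ⟨hA, hAin, hAmax⟩ := hmax
  by_contra hWle
  push_neg at hWle
  have hA1 : 1 < FreeGroup.mk A := by
    have := hA.2.1 A.length (List.length_pos_iff.2 hA.1) le_rfl
    simpa [List.take_length] using this
  have hWmk : FreeGroup.mk W = FreeGroup.mk P * FreeGroup.mk A * FreeGroup.mk Q := by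
    rw [hW, ← FreeGroup.mul_mk, ← FreeGroup.mul_mk]
  have hvle : FreeGroup.mk A * FreeGroup.mk Q * FreeGroup.mk P ≤ 1 := by
    by_contra hc
    push_neg at hc
    have h2 := aux_one_lt_conj (g := FreeGroup.mk P) hc
    have h3 : FreeGroup.mk P * (FreeGroup.mk A * FreeGroup.mk Q * FreeGroup.mk P) *
        (FreeGroup.mk P)⁻¹ = FreeGroup.mk W := by rw [hWmk]; group
    rw [h3] at h2
    exact absurd hWle (not_le.2 h2)
  have hb : FreeGroup.mk (FreeGroup.invRev (Q ++ P)) = (FreeGroup.mk Q * FreeGroup.mk P)⁻¹ := by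
    rw [FreeGroup.mul_mk, ← FreeGroup.inv_mk]
  have hqp : (FreeGroup.mk Q * FreeGroup.mk P)⁻¹ =
      (FreeGroup.mk A * FreeGroup.mk Q * FreeGroup.mk P)⁻¹ * FreeGroup.mk A := by group
  have haC : FreeGroup.mk A ≤ FreeGroup.mk (FreeGroup.invRev (Q ++ P)) := by
    rw [hb, hqp]
    exact aux_le_mul_of_one_le _ (aux_one_le_inv_of_le_one hvle)
  obtain ⟨D, hDinf, hDasc, hDge⟩ := aux_exists_ascent _ (hA1.trans_le haC)
  have hDin : InRW W D := by
    refine ⟨FreeGroup.invRev (Q ++ P) ++ FreeGroup.invRev A, Or.inr ?_,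
      hDinf.trans ⟨[], FreeGroup.invRev A, by simp⟩⟩
    have h1 : FreeGroup.invRev W =
        (FreeGroup.invRev Q ++ FreeGroup.invRev A) ++ FreeGroup.invRev P := by
      rw [hW, aux_invRev_append, aux_invRev_append, List.append_assoc]
    rw [h1, aux_invRev_append]
    have h2 := List.isRotated_append
      (l := FreeGroup.invRev Q ++ FreeGroup.invRev A) (l' := FreeGroup.invRev P)
    simpa [List.append_assoc] using h2
  have hDle := hAmax D hDasc hDin
  have h3 : (FreeGroup.mk A * FreeGroup.mk Q * FreeGroup.mk P)⁻¹ * FreeGroup.mk A ≤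
      FreeGroup.mk A := by
    calc (FreeGroup.mk A * FreeGroup.mk Q * FreeGroup.mk P)⁻¹ * FreeGroup.mk A
        = FreeGroup.mk (FreeGroup.invRev (Q ++ P)) := by rw [hb, hqp]
    _ ≤ FreeGroup.mk D := hDge
    _ ≤ FreeGroup.mk A := hDle
  have hvinvle := aux_le_of_mul_le_right h3
  have hveq : FreeGroup.mk A * FreeGroup.mk Q * FreeGroup.mk P = 1 := by
    refine le_antisymm hvle ?_
    rcases hvinvle.lt_or_eq with h' | h'
    · have h4 := mul_lt_mul_left h' (FreeGroup.mk A * FreeGroup.mk Q * FreeGroup.mk P)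
      rw [inv_mul_cancel, one_mul] at h4
      exact h4.le
    · exact (inv_eq_one.1 h').symm.le
  have hVred : Reduced ((A ++ Q) ++ P) := by
    apply aux_rotate_reduced (u := P) (v := A ++ Q)
    rwa [← List.append_assoc, ← hW]
  have hVnil : (A ++ Q) ++ P = [] := by
    apply hVred.eq_nil_of_mk_eq_one
    rw [← FreeGroup.mul_mk, ← FreeGroup.mul_mk, hveq]
  have : A = [] := by
    rcases List.append_eq_nil_iff.1 hVnil with ⟨h5, -⟩
    exact (List.append_eq_nil_iff.1 h5).1
  exact hA.1 this
end

section
/- Let W be a cyclically reduced word in a bi-ordered free group whose maximal ascent A occurs as a subword of W, and write W = AD with D ≠ 1. Then D is a descent: every nonempty prefix and every nonempty suffix of D is ≺ 1. -/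
variable {X : Type*}

lemma Reduced.infix {l l' : List (X × Bool)} (h : Reduced l) (h' : l' <:+: l) : Reduced l' :=
  List.IsChain.infix h h'

lemma reduce_eq_self [DecidableEq X] {w : List (X × Bool)} (hw : Reduced w) :
    FreeGroup.reduce w = w := by
  induction w with
  | nil => rfl
  | cons a t ih =>
    have ht : Reduced t := hw.tail
    rw [FreeGroup.reduce.cons, ih ht]
    cases t with
    | nil => rfl
    | cons b t' =>
      have hab : a.1 = b.1 → a.2 = b.2 := (List.isChain_cons_cons.1 hw).1
      simp only []
      rw [if_neg]
      rintro ⟨h1, h2⟩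
      rw [hab h1] at h2
      simp at h2

lemma mk_ne_one {w : List (X × Bool)} (hw : Reduced w) (hne : w ≠ []) :
    FreeGroup.mk w ≠ 1 := by
  classical
  intro h
  have : (FreeGroup.mk w).toWord = [] := by rw [h, FreeGroup.toWord_one]
  rw [FreeGroup.toWord_mk, reduce_eq_self hw] at this
  exact hne this

lemma reduced_rotate {W : List (X × Bool)} (hcr : CyclicallyReduced W) (n : ℕ) :
    Reduced (W.drop n ++ W.take n) := by
  unfold Reduced
  rw [List.Chain', List.isChain_append]
  refine ⟨hcr.1.suffix (W.drop_suffix n), hcr.1.prefix (W.take_prefix n), ?_⟩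
  intro x hx y hy
  have hxW : x ∈ W.getLast? := by
    rcases List.eq_nil_or_concat (W.drop n) with h | ⟨l, b, h⟩
    · rw [h] at hx; simp at hx
    · rw [List.concat_eq_append] at h
      rw [h] at hx
      rw [List.getLast?_concat] at hx
      simp only [Option.mem_def, Option.some.injEq] at hx
      subst hx
      have hsuf : W.drop n <:+ W := W.drop_suffix n
      rcases hsuf with ⟨p, hp⟩
      rw [h] at hp
      rw [← hp, ← List.append_assoc, List.getLast?_concat]
      rfl
  have hyW : y ∈ W.head? := by
    cases n with
    | zero => simp at hy
    | succ m =>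
      cases W with
      | nil => simp at hy
      | cons a t => simpa using hy
  intro h1
  exact (hcr.2 y hyW x hxW h1.symm).symm

lemma core [LinearOrder (FreeGroup X)]
    [CovariantClass (FreeGroup X) (FreeGroup X) (· * ·) (· < ·)]
    [CovariantClass (FreeGroup X) (FreeGroup X) (Function.swap (· * ·)) (· < ·)]
    (W A : List (X × Bool)) (hmax : IsMaxAscent W A)
    (V : List (X × Bool)) (hred : Reduced V) (hrot : List.IsRotated W V)
    (e : ℕ) (he : e ≤ V.length)
    (hgt : FreeGroup.mk A < FreeGroup.mk (V.take e)) : False := by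
  set g : ℕ → FreeGroup X := fun i => FreeGroup.mk (V.take i) with hg
  have hsub : ∀ i j : ℕ, i ≤ j → g i * FreeGroup.mk ((V.drop i).take (j - i)) = g j := by
    intro i j h
    show FreeGroup.mk _ * FreeGroup.mk _ = FreeGroup.mk _
    rw [FreeGroup.mul_mk, ← List.take_add, Nat.add_sub_cancel' h]
  have hinf : ∀ i j : ℕ, (V.drop i).take (j - i) <:+: V := fun i j =>
    (List.take_prefix _ _).isInfix.trans (List.drop_suffix i V).isInfix
  have hne : ∀ i j : ℕ, i < j → j ≤ V.length → g i ≠ g j := by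
    intro i j h hj heq
    have h2 := hsub i j h.le
    rw [← heq, mul_eq_left] at h2
    refine mk_ne_one (hred.infix (hinf i j)) ?_ h2
    apply List.ne_nil_of_length_pos
    rw [List.length_take, List.length_drop]
    omega
  have h1A : (1 : FreeGroup X) < FreeGroup.mk A := by
    have := hmax.1.2.1 A.length (List.length_pos_iff.2 hmax.1.1) le_rfl
    rwa [List.take_length] at this
  obtain ⟨k, hk_mem, hk⟩ := Finset.exists_max_image (Finset.range (e + 1)) g ⟨0, by simp⟩
  obtain ⟨m, hm_mem, hm⟩ := Finset.exists_min_image (Finset.range (k + 1)) g ⟨0, by simp⟩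
  simp only [Finset.mem_range, Nat.lt_succ_iff] at hk_mem hm_mem
  have hkV : k ≤ V.length := hk_mem.trans he
  have hm1 : g m ≤ 1 := by
    have := hm 0 (by simp)
    simpa [hg, ← FreeGroup.one_eq_mk] using this
  have hAk : FreeGroup.mk A < g k := lt_of_lt_of_le hgt (hk e (by simp))
  have hmk : m < k := by
    rcases lt_or_eq_of_le hm_mem with h | h
    · exact h
    · rw [h] at hm1
      exact absurd (hm1.trans_lt (h1A.trans hAk)) (lt_irrefl _)
  set B := (V.drop m).take (k - m) with hB
  have hBlen : B.length = k - m := by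
    rw [hB, List.length_take, List.length_drop]; omega
  have hBasc : IsAscent B := by
    refine ⟨List.ne_nil_of_length_pos (by omega), ?_, ?_⟩
    · intro i hi hile
      rw [hBlen] at hile
      have ht : B.take i = (V.drop m).take ((m + i) - m) := by
        rw [hB, List.take_take, min_eq_left hile]
        congr 1
        omega
      have heq := hsub m (m + i) (by omega)
      rw [← ht] at heq
      have hlt : g m < g (m + i) :=
        lt_of_le_of_ne (hm (m + i) (Finset.mem_range.2 (by omega)))
          (hne m (m + i) (by omega) (by omega))
      have := mul_lt_mul_right hlt (g m)⁻¹
      rw [inv_mul_cancel, ← heq, inv_mul_cancel_left] at this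
      exact this
    · intro i hilt
      rw [hBlen] at hilt
      have ht : B.drop i = (V.drop (m + i)).take (k - (m + i)) := by
        rw [hB, List.drop_take, List.drop_drop]
        congr 1
        omega
      have heq := hsub (m + i) k (by omega)
      rw [← ht] at heq
      have hlt : g (m + i) < g k :=
        lt_of_le_of_ne (hk (m + i) (Finset.mem_range.2 (by omega)))
          (hne (m + i) k (by omega) hkV)
      have := mul_lt_mul_right hlt (g (m + i))⁻¹
      rw [inv_mul_cancel, ← heq, inv_mul_cancel_left] at this
      exact this
  have hle := hmax.2.2 B hBasc ⟨V, Or.inl hrot, hB ▸ hinf m k⟩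
  have heqB := hsub m k hmk.le
  have hfin : FreeGroup.mk A < FreeGroup.mk B := by
    have hBval : FreeGroup.mk B = (g m)⁻¹ * g k := by
      rw [← heqB, inv_mul_cancel_left]
    rcases eq_or_lt_of_le hm1 with h | h
    · rw [hBval, h, inv_one, one_mul]
      exact hAk
    · have h2 : (1 : FreeGroup X) < (g m)⁻¹ := by
        have := mul_lt_mul_right h (g m)⁻¹
        rwa [inv_mul_cancel, mul_one] at this
      have h3 : g k < (g m)⁻¹ * g k := by
        have := mul_lt_mul_left h2 (g k)
        rwa [one_mul] at this
      rw [hBval]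
      exact hAk.trans h3
  exact absurd hle (not_le.2 hfin)

/-- If a cyclically reduced word `W` factors as `W = AD` with `A` its maximal
ascent and `D ≠ 1`, then `D` is a descent. -/
theorem complement_of_max_ascent_is_descent [LinearOrder (FreeGroup X)]
    [CovariantClass (FreeGroup X) (FreeGroup X) (· * ·) (· < ·)]
    [CovariantClass (FreeGroup X) (FreeGroup X) (Function.swap (· * ·)) (· < ·)]
    (W A D : List (X × Bool)) (hcr : CyclicallyReduced W)
    (hmax : IsMaxAscent W A) (hW : W = A ++ D) (hD : D ≠ []) :
    IsDescent D := by

  have hredW : Reduced W := hcr.1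
  have hDinf : D <:+: W := ⟨A, [], by rw [hW, List.append_nil]⟩
  have hlenW : W.length = A.length + D.length := by rw [hW, List.length_append]
  refine ⟨hD, ?_, ?_⟩
  · intro i hi hile
    by_contra hc
    push_neg at hc
    have hred_p : Reduced (D.take i) :=
      hredW.infix ((List.take_prefix i D).isInfix.trans hDinf)
    have hp_ne : D.take i ≠ [] :=
      List.ne_nil_of_length_pos (by rw [List.length_take]; omega)
    have h1p : (1 : FreeGroup X) < FreeGroup.mk (D.take i) :=
      lt_of_le_of_ne hc (Ne.symm (mk_ne_one hred_p hp_ne))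
    have he1 : A.length + i ≤ W.length := by rw [hlenW]; omega
    refine core W A hmax W hredW (List.IsRotated.refl W) (A.length + i) he1 ?_
    rw [hW, List.take_append, List.take_of_length_le (by omega : A.length ≤ A.length + i),
      Nat.add_sub_cancel_left, ← FreeGroup.mul_mk]
    calc FreeGroup.mk A = FreeGroup.mk A * 1 := (mul_one _).symm
      _ < _ := mul_lt_mul_right h1p _
  · intro i hilt
    by_contra hc
    push_neg at hc
    have hred_s : Reduced (D.drop i) :=
      hredW.infix ((List.drop_suffix i D).isInfix.trans hDinf)
    have hs_ne : D.drop i ≠ [] :=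
      List.ne_nil_of_length_pos (by rw [List.length_drop]; omega)
    have h1s : (1 : FreeGroup X) < FreeGroup.mk (D.drop i) :=
      lt_of_le_of_ne hc (Ne.symm (mk_ne_one hred_s hs_ne))
    have hniW : A.length + i ≤ W.length := by rw [hlenW]; omega
    have hrot : List.IsRotated W (W.drop (A.length + i) ++ W.take (A.length + i)) :=
      ⟨A.length + i, List.rotate_eq_drop_append_take hniW⟩
    have hVred : Reduced (W.drop (A.length + i) ++ W.take (A.length + i)) :=
      reduced_rotate hcr _
    refine core W A hmax _ hVred hrot ((D.drop i).length + A.length) ?_ ?_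
    · rw [List.length_append, List.length_take, List.length_drop, List.length_drop]
      omega
    · have hdrop : W.drop (A.length + i) = D.drop i := by rw [hW, List.drop_append]; simp
      have htake : (W.drop (A.length + i) ++ W.take (A.length + i)).take
          ((D.drop i).length + A.length) = D.drop i ++ A := by
        rw [hdrop, List.take_append]
        congr 1
        · exact List.take_of_length_le (by omega)
        rw [Nat.add_sub_cancel_left, hW, List.take_take, Nat.min_eq_left (by omega), List.take_left]
      rw [htake, ← FreeGroup.mul_mk]
      calc FreeGroup.mk A = 1 * FreeGroup.mk A := (one_mul _).symm
        _ < _ := mul_lt_mul_left h1s _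
end
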